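/- Let P ⊆ ℝ^d be a d-dimensional rational polytope and a ∈ int(P) a rational vector. Then for every positive real t, the Ehrhart counting function satisfies L_P(t) = lim_{τ→0⁺} A_{P, τ(P-a)}(t), where A_{P,R}(t) := Σ_{x∈ℤ^d} ω_{tP+R}(x) is the shifted solid angle sum and + denotes Minkowski sum. -/

import Mathlib

open scoped BigOperators
open MeasureTheory
attribute [local instance] Classical.propDecidable

/-- The Euclidean ball of radius `ε` around `c` in `ℝ^d`. -/
def eball {d : ℕ} (c : Fin d → ℝ) (ε : ℝ) : Set (Fin d → ℝ) :=
  {y | ∑ i, (y i - c i) ^ 2 < ε ^ 2}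

/-- `saTendsto Q c ω` says that the solid angle of `Q` at `c` exists and equals `ω`:
the proportion of a small Euclidean ball around `c` occupied by `Q` tends to `ω`. -/
def saTendsto {d : ℕ} (Q : Set (Fin d → ℝ)) (c : Fin d → ℝ) (ω : ℝ) : Prop :=
  Filter.Tendsto
    (fun ε : ℝ => (volume (eball c ε ∩ Q)).toReal / (volume (eball c ε)).toReal)
    (nhdsWithin 0 (Set.Ioi 0)) (nhds ω)

open Pointwise

/-! Since `a` is interior to `P`, the origin is interior to `P - a`, so for every `τ > 0` each
lattice point of `tP` is an interior point of `tP + τ(P - a)` and has solid angle `1`. Since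
`tP + τ(P - a)` lies in the `O(τ)`-thickening of the compact set `tP`, a lattice point outside `tP`
eventually has solid angle `0`, and for small `τ` this holds simultaneously for all lattice points
outside the `1`-thickening of `tP`, of which all but finitely many are. So for small `τ` the
solid angle sum is exactly `L_P(t)`. -/

open Filter Topology Bornology

section EuclideanBall

variable {d : ℕ} (c : Fin d → ℝ)

lemma isOpen_eball (ε : ℝ) : IsOpen (eball c ε) :=
  isOpen_lt (by fun_prop) continuous_const

lemma mem_eball_self {ε : ℝ} (hε : ε ≠ 0) : c ∈ eball c ε := by
  have : 0 < ε ^ 2 := by positivity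
  simpa [_root_.eball] using this

lemma eball_subset_ball {ε : ℝ} (hε : 0 < ε) : eball c ε ⊆ Metric.ball c ε := by
  intro y hy
  rw [Metric.mem_ball, dist_pi_lt_iff hε]
  intro i
  rw [Real.dist_eq, ← sq_lt_sq₀ (abs_nonneg _) hε.le, sq_abs]
  exact (Finset.single_le_sum (fun j _ => sq_nonneg (y j - c j)) (Finset.mem_univ i)).trans_lt hy

lemma volume_eball_pos {ε : ℝ} (hε : ε ≠ 0) : 0 < volume (eball c ε) :=
  (isOpen_eball c ε).measure_pos volume ⟨c, mem_eball_self c hε⟩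

lemma volume_eball_lt_top {ε : ℝ} (hε : 0 < ε) : volume (eball c ε) < ⊤ :=
  (measure_mono (eball_subset_ball c hε)).trans_lt measure_ball_lt_top

lemma eventually_eball_subset {Q : Set (Fin d → ℝ)} (hQ : Q ∈ 𝓝 c) :
    ∀ᶠ ε in 𝓝[>] 0, eball c ε ⊆ Q := by
  obtain ⟨r, hr, hsub⟩ := Metric.mem_nhds_iff.1 hQ
  filter_upwards [Ioo_mem_nhdsGT (gt_iff_lt.1 hr)] with ε hε
  exact (eball_subset_ball c hε.1).trans ((Metric.ball_subset_ball hε.2.le).trans hsub)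

lemma saTendsto_one_of_mem_interior {Q : Set (Fin d → ℝ)} (hc : c ∈ interior Q) :
    saTendsto Q c 1 := by
  refine tendsto_const_nhds.congr' ?_
  filter_upwards [eventually_eball_subset c (mem_interior_iff_mem_nhds.1 hc),
    self_mem_nhdsWithin] with ε hsub (hε : 0 < ε)
  rw [Set.inter_eq_left.2 hsub, div_self]
  exact (ENNReal.toReal_pos (volume_eball_pos c hε.ne').ne' (volume_eball_lt_top c hε).ne).ne'

lemma saTendsto_zero_of_notMem_closure {Q : Set (Fin d → ℝ)} (hc : c ∉ closure Q) :
    saTendsto Q c 0 := by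
  refine tendsto_const_nhds.congr' ?_
  filter_upwards [eventually_eball_subset c (isClosed_closure.isOpen_compl.mem_nhds hc)]
    with ε hsub
  have hempty : eball c ε ∩ Q = ∅ :=
    Set.eq_empty_of_forall_notMem fun y hy => hsub hy.1 (subset_closure hy.2)
  simp [hempty]

end EuclideanBall

section MinkowskiSum

open Metric

variable {𝕜 E : Type*} [NormedField 𝕜] [NormedAddCommGroup E] [NormedSpace 𝕜 E]

lemma mem_interior_add_smul {s U : Set E} {x : E} (hx : x ∈ s) (hU : (0 : E) ∈ interior U)
    {τ : 𝕜} (hτ : τ ≠ 0) : x ∈ interior (s + τ • U) := by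
  have h0 : (0 : E) ∈ interior (τ • U) := by
    rw [interior_smul₀ hτ]
    simpa using Set.smul_mem_smul_set (a := τ) hU
  simpa using subset_interior_add_right (Set.add_mem_add hx h0)

lemma eventually_closure_add_smul_subset_cthickening {K B : Set E} (hK : IsCompact K)
    (hB : IsBounded B) {δ : ℝ} (hδ : 0 < δ) :
    ∀ᶠ τ in 𝓝 (0 : 𝕜), closure (K + τ • B) ⊆ cthickening δ K := by
  obtain ⟨R, hR, hBR⟩ := hB.subset_closedBall_lt 0 0
  have hsmall : ∀ᶠ τ in 𝓝 (0 : 𝕜), ‖τ‖ * R < δ := by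
    have : Tendsto (fun τ : 𝕜 => ‖τ‖ * R) (𝓝 0) (𝓝 0) := by
      simpa using (continuous_norm.tendsto (0 : 𝕜)).mul_const R
    exact this.eventually (gt_mem_nhds hδ)
  filter_upwards [hsmall] with τ hτ
  refine closure_minimal ?_ isClosed_cthickening
  calc K + τ • B ⊆ K + closedBall 0 (‖τ‖ * R) := by
        grw [hBR, smul_closedBall τ 0 hR.le, smul_zero]
    _ = cthickening (‖τ‖ * R) K := hK.add_closedBall_zero (by positivity)
    _ ⊆ cthickening δ K := cthickening_mono hτ.le K

end MinkowskiSum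

lemma finite_setOf_intCast_mem {ι : Type*} [Fintype ι] {s : Set (ι → ℝ)} (hs : IsBounded s) :
    {n : ι → ℤ | (fun i => (n i : ℝ)) ∈ s}.Finite := by
  have hcast : Isometry (fun (n : ι → ℤ) i => (n i : ℝ)) :=
    Isometry.piMap (fun _ => Int.cast) fun _ => Real.isometry_intCast
  exact (Metric.isCompact_of_isClosed_isBounded (isClosed_discrete _)
    (hcast.antilipschitz.isBounded_preimage hs)).finite_of_discrete

section ShiftedSolidAngle

variable {d : ℕ} {K B : Set (Fin d → ℝ)}

lemma saTendsto_add_smul_of_mem (h0 : (0 : Fin d → ℝ) ∈ interior B) {τ : ℝ} (hτ : τ ≠ 0)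
    {x : Fin d → ℝ} (hx : x ∈ K) : saTendsto (K + τ • B) x 1 :=
  saTendsto_one_of_mem_interior x (mem_interior_add_smul hx h0 hτ)

lemma eventually_saTendsto_add_smul_of_notMem (hK : IsCompact K) (hB : IsBounded B)
    {x : Fin d → ℝ} (hx : x ∉ K) : ∀ᶠ τ in 𝓝 (0 : ℝ), saTendsto (K + τ • B) x 0 := by
  obtain ⟨δ, hδ, hsub⟩ := hK.exists_cthickening_subset_open isOpen_compl_singleton
    (Set.subset_compl_singleton_iff.2 hx)
  filter_upwards [eventually_closure_add_smul_subset_cthickening hK hB hδ] with τ hτ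
  exact saTendsto_zero_of_notMem_closure x fun hx' => hsub (hτ hx') rfl

lemma eventually_saTendsto_add_smul_of_notMem_cthickening (hK : IsCompact K)
    (hB : IsBounded B) :
    ∀ᶠ τ in 𝓝 (0 : ℝ), ∀ x ∉ Metric.cthickening 1 K, saTendsto (K + τ • B) x 0 := by
  filter_upwards [eventually_closure_add_smul_subset_cthickening hK hB one_pos] with τ hτ x hx
  exact saTendsto_zero_of_notMem_closure x fun hx' => hx (hτ hx')

lemma eventually_eq_indicator_of_saTendsto (hK : IsCompact K) (hB : IsBounded B)
    (h0 : (0 : Fin d → ℝ) ∈ interior B) {ω : ℝ → (Fin d → ℤ) → ℝ}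
    (hω : ∀ τ ∈ Set.Ioi (0 : ℝ), ∀ n : Fin d → ℤ,
      saTendsto (K + τ • B) (fun i => (n i : ℝ)) (ω τ n)) :
    ∀ᶠ τ in 𝓝[>] 0, ω τ = {n : Fin d → ℤ | (fun i => (n i : ℝ)) ∈ K}.indicator 1 := by
  set S := {n : Fin d → ℤ | (fun i => (n i : ℝ)) ∈ K}
  set F := {n : Fin d → ℤ | (fun i => (n i : ℝ)) ∈ Metric.cthickening 1 K}
  have hF : F.Finite := finite_setOf_intCast_mem hK.isBounded.cthickening
  have hpoint : ∀ n, ∀ᶠ τ in 𝓝[>] 0, ω τ n = S.indicator 1 n := by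
    intro n
    by_cases hn : n ∈ S
    · filter_upwards [self_mem_nhdsWithin] with τ hτ
      rw [Set.indicator_of_mem hn]
      exact tendsto_nhds_unique (hω τ hτ n) (saTendsto_add_smul_of_mem h0 hτ.ne' hn)
    · filter_upwards [self_mem_nhdsWithin,
        nhdsWithin_le_nhds (eventually_saTendsto_add_smul_of_notMem hK hB hn)] with τ hτ hzero
      rw [Set.indicator_of_notMem hn]
      exact tendsto_nhds_unique (hω τ hτ n) hzero
  filter_upwards [self_mem_nhdsWithin, hF.eventually_all.2 fun n _ => hpoint n,
    nhdsWithin_le_nhds (eventually_saTendsto_add_smul_of_notMem_cthickening hK hB)]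
    with τ hτ hin hout
  funext n
  by_cases hn : n ∈ F
  · exact hin n hn
  · rw [Set.indicator_of_notMem fun (h : n ∈ S) => hn (Metric.self_subset_cthickening K h)]
    exact tendsto_nhds_unique (hω τ hτ n) (hout _ hn)

end ShiftedSolidAngle

theorem ehrhart_eq_limit_shifted_solid_angle_sum_general (d : ℕ) (V : Finset (Fin d → ℚ))
    (P : Set (Fin d → ℝ))
    (hP : P = convexHull ℝ ((fun v : Fin d → ℚ => fun i => ((v i : ℝ))) '' (V : Set (Fin d → ℚ))))
    (a : Fin d → ℚ) (ha : (fun i => (a i : ℝ)) ∈ interior P)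
    (t : ℝ)
    (ω : ℝ → (Fin d → ℤ) → ℝ)
    (hω : ∀ τ ∈ Set.Ioi (0 : ℝ), ∀ n : Fin d → ℤ,
      saTendsto (t • P + τ • ((fun p => p - fun i => (a i : ℝ)) '' P)) (fun i => (n i : ℝ))
        (ω τ n)) :
    Filter.Tendsto (fun τ : ℝ => ∑' n : Fin d → ℤ, ω τ n) (nhdsWithin 0 (Set.Ioi 0))
      (nhds ((Set.ncard {n : Fin d → ℤ | (fun i => (n i : ℝ)) ∈ t • P} : ℝ))) := by
  set A : Fin d → ℝ := fun i => (a i : ℝ)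
  have hPc : IsCompact P := hP ▸ (V.finite_toSet.image _).isCompact_convexHull (𝕜 := ℝ)
  have hB : IsBounded ((fun p => p - A) '' P) :=
    (hPc.image (continuous_sub_right A)).isBounded
  have h0 : (0 : Fin d → ℝ) ∈ interior ((fun p => p - A) '' P) := by
    change (0 : Fin d → ℝ) ∈ interior (Homeomorph.subRight A '' P)
    rw [← (Homeomorph.subRight A).image_interior]
    exact ⟨A, ha, sub_self A⟩
  refine tendsto_const_nhds.congr' ?_
  filter_upwards [eventually_eq_indicator_of_saTendsto (hPc.smul t) hB h0 hω] with τ hτ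
  rw [hτ, ← tsum_subtype]
  simp only [Pi.one_apply, tsum_const, Nat.card_coe_set_eq, nsmul_one]

/-- The Ehrhart counting function of a rational polytope `P` is the limit, as `τ → 0⁺`, of the
shifted solid angle sums `A_{P,τ(P-a)}(t) = Σ_{x∈ℤ^d} ω_{tP+τ(P-a)}(x)`, for any rational
interior point `a` of `P`. -/
theorem ehrhart_eq_limit_shifted_solid_angle_sum (d : ℕ) (V : Finset (Fin d → ℚ))
    (P : Set (Fin d → ℝ))
    (hP : P = convexHull ℝ ((fun v : Fin d → ℚ => fun i => ((v i : ℝ))) '' (V : Set (Fin d → ℚ))))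
    (hfull : (interior P).Nonempty)
    (a : Fin d → ℚ) (ha : (fun i => (a i : ℝ)) ∈ interior P)
    (t : ℝ) (ht : 0 < t)
    (ω : ℝ → (Fin d → ℤ) → ℝ)
    (hω : ∀ τ ∈ Set.Ioi (0 : ℝ), ∀ n : Fin d → ℤ,
      saTendsto (t • P + τ • ((fun p => p - fun i => (a i : ℝ)) '' P)) (fun i => (n i : ℝ))
        (ω τ n)) :
    Filter.Tendsto (fun τ : ℝ => ∑' n : Fin d → ℤ, ω τ n) (nhdsWithin 0 (Set.Ioi 0))
      (nhds ((Set.ncard {n : Fin d → ℤ | (fun i => (n i : ℝ)) ∈ t • P} : ℝ))) :=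
  ehrhart_eq_limit_shifted_solid_angle_sum_general d V P hP a ha t ω hω
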